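/- For every cyclic flat Z0 of M⁺, either Z0 − e is a cyclic flat of M, or γ_M(Z0 − e) = 0. -/

import Mathlib

/-!
`Z0 \ {e}` is always a flat of `M \ e`. If it is not cyclic, let `K` be its cyclic part, the
union of the circuits it contains. Then `K` is a cyclic flat with the same nullity (the other
elements are coloops of the restriction), and the cyclic flats strictly inside `Z0 \ {e}` are
exactly those inside `K`. As `∑_{Z ⊆ K} γ(Z) = n(K)` for a cyclic flat `K`, the recursion gives
`γ(Z0 \ {e}) = n(Z0 \ {e}) - n(K) = 0`.
-/

open Set Matroid
open scoped Classical

namespace Paper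

variable {α : Type*}

/-- A circuit of a matroid: a minimal dependent set. -/
def Circuit (M : Matroid α) (C : Set α) : Prop :=
  M.Dep C ∧ ∀ D ⊂ C, M.Indep D

/-- A coloop: an element of the ground set lying in no circuit. -/
def Coloop (M : Matroid α) (x : α) : Prop :=
  x ∈ M.E ∧ ∀ C, Circuit M C → x ∉ C

/-- The set of coloops of a matroid. -/
def coloops (M : Matroid α) : Set α := {x | Coloop M x}

/-- A cyclic set: a subset of the ground set each of whose elements lies in a
circuit contained in the set (equivalently, the restriction has no coloops). -/
def Cyclic (M : Matroid α) (X : Set α) : Prop :=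
  X ⊆ M.E ∧ ∀ x ∈ X, ∃ C, Circuit M C ∧ C ⊆ X ∧ x ∈ C

/-- A cyclic flat: a cyclic set that is also a flat. -/
def CyclicFlat (M : Matroid α) (X : Set α) : Prop :=
  Cyclic M X ∧ M.IsFlat X

/-- The rank of a set: the largest cardinality of an independent subset. -/
noncomputable def rk (M : Matroid α) (X : Set α) : ℕ :=
  sSup (Set.ncard '' {I | M.Indep I ∧ I ⊆ X})

/-- The nullity of a set: `n(X) = |X| − r(X)`. -/
noncomputable def nullity (M : Matroid α) (X : Set α) : ℤ :=
  (X.ncard : ℤ) - rk M X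

/-- Deletion of a single element: `M \ e`. -/
noncomputable def deleteElem (M : Matroid α) (e : α) : Matroid α :=
  M ↾ (M.E \ {e})

variable [Fintype α] [DecidableEq α]

/-- The `γ` function: `γ_M(X) = n(X) − Σ_{Z ∈ Z(M), Z ⊊ X} γ_M(Z)`. -/
noncomputable def gamma (M : Matroid α) (X : Finset α) : ℤ :=
  nullity M ↑X -
    ∑ Z ∈ (Finset.univ.filter (fun Z : Finset α => CyclicFlat M ↑Z ∧ Z ⊂ X)).attach,
      gamma M Z.1
termination_by X.card
decreasing_by
  exact Finset.card_lt_card (Finset.mem_filter.mp Z.2).2.2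

end Paper

namespace Matroid

variable {α : Type*} {M : Matroid α} {F R : Set α}

lemma IsFlat.restrict_inter (hF : M.IsFlat F) (hR : R ⊆ M.E) : (M ↾ R).IsFlat (F ∩ R) := by
  rw [isFlat_iff_closure_eq, restrict_closure_eq M inter_subset_right hR]
  refine (subset_inter ?_ inter_subset_right).antisymm' (inter_subset_inter_left R ?_)
  · exact M.subset_closure _ (inter_subset_left.trans hF.subset_ground)
  · exact (M.closure_subset_closure inter_subset_left).trans hF.closure.subset

end Matroid

namespace Paper

variable {α : Type*} {M : Matroid α} {C F : Set α}

lemma circuit_iff_isCircuit : Circuit M C ↔ M.IsCircuit C :=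
  isCircuit_iff_forall_ssubset.symm

lemma isFlat_deleteElem (hF : M.IsFlat F) (e : α) : (deleteElem M e).IsFlat (F \ {e}) := by
  have h := hF.restrict_inter (R := M.E \ {e}) sdiff_subset
  rwa [← inter_sdiff_assoc, inter_eq_self_of_subset_left hF.subset_ground] at h

section Finite

variable [Finite α] {I X K : Set α}

lemma rk_eq_ncard_of_isBasis (hI : M.IsBasis I X) : rk M X = I.ncard := by
  refine IsGreatest.csSup_eq ⟨⟨I, ⟨hI.indep, hI.subset⟩, rfl⟩, ?_⟩
  rintro _ ⟨J, ⟨hJ, hJX⟩, rfl⟩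
  have h := hJ.encard_le_eRk_of_subset hJX
  rw [← hI.encard_eq_eRk, ← J.toFinite.cast_ncard_eq, ← I.toFinite.cast_ncard_eq] at h
  exact_mod_cast h

lemma nullity_eq_of_sdiff_subset_coloops (hKX : K ⊆ X) (hX : X ⊆ M.E)
    (hcol : X \ K ⊆ (M ↾ X).coloops) : nullity M K = nullity M X := by
  obtain ⟨I, hI⟩ := M.exists_isBasis K (hKX.trans hX)
  obtain ⟨B, hB, hIB⟩ := hI.indep.subset_isBasis_of_subset (hI.subset.trans hKX) hX
  have hBK : B ∩ K = I :=
    (hI.eq_of_subset_indep (hB.indep.subset inter_subset_left) (subset_inter hIB hI.subset)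
      inter_subset_right).symm
  have hXK : X \ K ⊆ B := fun x hx => hB.restrict_isBase.mem_of_isColoop (hcol hx)
  have hBeq : B = I ∪ X \ K := calc
    B = B ∩ K ∪ B \ K := (inter_union_sdiff B K).symm
    _ = I ∪ X \ K := by
      rw [hBK, (sdiff_subset_sdiff_left hB.subset).antisymm fun x hx => ⟨hXK hx, hx.2⟩]
  have hdisj : Disjoint I (X \ K) := disjoint_sdiff_right.mono_left hI.subset
  rw [nullity, nullity, rk_eq_ncard_of_isBasis hI, rk_eq_ncard_of_isBasis hB, hBeq,
    ncard_union_eq hdisj, ← ncard_sdiff_add_ncard_of_subset hKX]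
  push_cast
  ring

end Finite

noncomputable def cyclicPart (M : Matroid α) (X : Finset α) : Finset α :=
  X.filter fun x => ∃ C, Circuit M C ∧ C ⊆ ↑X ∧ x ∈ C

variable {X : Finset α}

lemma mem_cyclicPart {x : α} :
    x ∈ cyclicPart M X ↔ x ∈ X ∧ ∃ C, Circuit M C ∧ C ⊆ ↑X ∧ x ∈ C :=
  Finset.mem_filter

lemma cyclicPart_subset : cyclicPart M X ⊆ X :=
  Finset.filter_subset _ _

lemma Cyclic.subset_cyclicPart {W : Set α} (hW : Cyclic M W) (hWX : W ⊆ ↑X) : W ⊆ ↑(cyclicPart M X) := by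
  intro x hx
  obtain ⟨C, hC, hCW, hxC⟩ := hW.2 x hx
  exact mem_cyclicPart.2 ⟨hWX hx, C, hC, hCW.trans hWX, hxC⟩

lemma cyclic_cyclicPart (hX : ↑X ⊆ M.E) : Cyclic M ↑(cyclicPart M X) := by
  refine ⟨(Finset.coe_subset.2 cyclicPart_subset).trans hX, fun x hx => ?_⟩
  obtain ⟨-, C, hC, hCX, hxC⟩ := mem_cyclicPart.1 hx
  exact ⟨C, hC, fun y hy => mem_cyclicPart.2 ⟨hCX hy, C, hC, hCX, hy⟩, hxC⟩

lemma cyclicPart_ssubset (hX : ↑X ⊆ M.E) (hnc : ¬ Cyclic M ↑X) : cyclicPart M X ⊂ X :=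
  cyclicPart_subset.ssubset_of_ne fun h => hnc (h ▸ cyclic_cyclicPart hX)

/-- A circuit through a point of `cl(K) \ K` lies in the flat `X`, so that point is in `K`. -/
lemma isFlat_cyclicPart (hX : M.IsFlat ↑X) : M.IsFlat ↑(cyclicPart M X) := by
  have hKX : (↑(cyclicPart M X) : Set α) ⊆ ↑X := Finset.coe_subset.2 cyclicPart_subset
  refine isFlat_iff_closure_eq.2 (subset_antisymm (fun y hy => ?_)
    (M.subset_closure _ (hKX.trans hX.subset_ground)))
  by_contra hyK
  have hyX : y ∈ (↑X : Set α) := hX.closure.subset (M.closure_subset_closure hKX hy)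
  obtain ⟨C, hCK, hC, hyC⟩ := (mem_closure_iff_exists_isCircuit hyK).1 hy
  exact hyK <| mem_cyclicPart.2
    ⟨hyX, C, circuit_iff_isCircuit.2 hC, hCK.trans (insert_subset hyX hKX), hyC⟩

lemma sdiff_cyclicPart_subset_coloops (hX : ↑X ⊆ M.E) :
    ↑X \ ↑(cyclicPart M X) ⊆ (M ↾ ↑X).coloops := by
  rintro x ⟨hxX, hxK⟩
  refine (isColoop_iff_forall_notMem_isCircuit (by exact hxX)).2 fun C hC hxC => hxK ?_
  rw [restrict_isCircuit_iff hX] at hC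
  exact mem_cyclicPart.2 ⟨hxX, C, circuit_iff_isCircuit.2 hC.1, hC.2, hxC⟩

lemma nullity_cyclicPart [Finite α] (hX : ↑X ⊆ M.E) :
    nullity M ↑(cyclicPart M X) = nullity M ↑X :=
  nullity_eq_of_sdiff_subset_coloops (Finset.coe_subset.2 cyclicPart_subset) hX
    (sdiff_cyclicPart_subset_coloops hX)

variable [Fintype α] [DecidableEq α]

lemma gamma_eq_nullity_sub_sum (M : Matroid α) (X : Finset α) :
    gamma M X = nullity M ↑X -
      ∑ Z ∈ Finset.univ.filter (fun Z : Finset α => CyclicFlat M ↑Z ∧ Z ⊂ X), gamma M Z := by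
  rw [gamma, Finset.sum_attach]

lemma CyclicFlat.sum_gamma_eq_nullity (hX : CyclicFlat M ↑X) :
    ∑ Z ∈ Finset.univ.filter (fun Z : Finset α => CyclicFlat M ↑Z ∧ Z ⊆ X), gamma M Z =
      nullity M ↑X := by
  have hfilter : Finset.univ.filter (fun Z : Finset α => CyclicFlat M ↑Z ∧ Z ⊆ X) =
      insert X (Finset.univ.filter (fun Z : Finset α => CyclicFlat M ↑Z ∧ Z ⊂ X)) := by
    ext Z
    simp only [Finset.mem_filter, Finset.mem_univ, true_and, Finset.mem_insert]
    constructor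
    · rintro ⟨hZ, hZX⟩
      obtain rfl | hne := eq_or_ne Z X
      exacts [Or.inl rfl, Or.inr ⟨hZ, hZX.ssubset_of_ne hne⟩]
    · rintro (rfl | ⟨hZ, hZX⟩)
      exacts [⟨hX, subset_rfl⟩, ⟨hZ, hZX.subset⟩]
  rw [hfilter, Finset.sum_insert (by simp), gamma_eq_nullity_sub_sum]
  ring

lemma gamma_eq_zero_of_isFlat_of_not_cyclic (hX : M.IsFlat ↑X) (hnc : ¬ Cyclic M ↑X) :
    gamma M X = 0 := by
  have hK : CyclicFlat M ↑(cyclicPart M X) :=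
    ⟨cyclic_cyclicPart hX.subset_ground, isFlat_cyclicPart hX⟩
  have hfilter : Finset.univ.filter (fun Z : Finset α => CyclicFlat M ↑Z ∧ Z ⊂ X) =
      Finset.univ.filter (fun Z : Finset α => CyclicFlat M ↑Z ∧ Z ⊆ cyclicPart M X) := by
    ext Z
    simp only [Finset.mem_filter, Finset.mem_univ, true_and]
    refine and_congr_right fun hZ => ⟨fun hZX => ?_, fun hZK => ?_⟩
    · exact Finset.coe_subset.1 (hZ.1.subset_cyclicPart (Finset.coe_subset.2 hZX.subset))
    · exact hZK.trans_ssubset (cyclicPart_ssubset hX.subset_ground hnc)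
  rw [gamma_eq_nullity_sub_sum, hfilter, hK.sum_gamma_eq_nullity,
    nullity_cyclicPart hX.subset_ground, sub_self]

theorem statement_10_general (M : Matroid α) (e : α)
    (Z0 : Finset α) (h0 : CyclicFlat M ↑Z0) :
    CyclicFlat (deleteElem M e) ↑(Z0.erase e) ∨
      gamma (deleteElem M e) (Z0.erase e) = 0 := by
  have hflat : (deleteElem M e).IsFlat ↑(Z0.erase e) := by
    rw [Finset.coe_erase]
    exact isFlat_deleteElem h0.2 e
  by_cases hcyc : Cyclic (deleteElem M e) ↑(Z0.erase e)
  · exact Or.inl ⟨hcyc, hflat⟩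
  · exact Or.inr (gamma_eq_zero_of_isFlat_of_not_cyclic hflat hcyc)

theorem statement_10 (M : Matroid α) (e : α) (he : e ∈ M.E)
    (Z0 : Finset α) (h0 : CyclicFlat M ↑Z0) :
    CyclicFlat (deleteElem M e) ↑(Z0.erase e) ∨
      gamma (deleteElem M e) (Z0.erase e) = 0 :=
  statement_10_general M e Z0 h0

end Paper
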